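/- There exists exactly one Hausdorff compact topology on the semigroup OI_n(L) with respect to which multiplication is separately continuous (all left and right translations are continuous); namely, if τ and τ' are two Hausdorff compact topologies on OI_n(L) for which all left and right translations are continuous, then τ = τ'. -/

import Mathlib

open Set Topology TopologicalSpace

universe u v

variable {L : Type u}

/-- A partial map `f : L →. L` is a finite partial order isomorphism of rank `≤ n`:
its domain is finite with at most `n` elements, and it is an order isomorphism
from its domain onto its range. -/
def IsOI [LinearOrder L] (n : ℕ) (f : L →. L) : Prop :=
  f.Dom.Finite ∧ f.Dom.ncard ≤ n ∧
    ∀ x ∈ f.Dom, ∀ y ∈ f.Dom, ∀ a b, a ∈ f x → b ∈ f y → (x ≤ y ↔ a ≤ b)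

/-- The semigroup `OI_n(L)` of finite partial order isomorphisms of rank `≤ n`. -/
def OI (L : Type u) [LinearOrder L] (n : ℕ) : Type u := {f : L →. L // IsOI n f}

theorem IsOI.comp [LinearOrder L] {n : ℕ} {f g : L →. L}
    (hf : IsOI n f) (hg : IsOI n g) : IsOI n (g.comp f) := by
  have hsub : (g.comp f).Dom ⊆ f.Dom := by
    intro x hx
    rw [PFun.mem_dom] at hx ⊢
    obtain ⟨c, hc⟩ := hx
    rw [PFun.comp_apply] at hc
    obtain ⟨b, hb, -⟩ := Part.mem_bind_iff.1 hc
    exact ⟨b, hb⟩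
  refine ⟨hf.1.subset hsub, le_trans (Set.ncard_le_ncard hsub hf.1) hf.2.1, ?_⟩
  intro x hx y hy a b ha hb
  rw [PFun.comp_apply] at ha hb
  obtain ⟨u, hu, hau⟩ := Part.mem_bind_iff.1 ha
  obtain ⟨v, hv, hbv⟩ := Part.mem_bind_iff.1 hb
  have hxd : x ∈ f.Dom := (PFun.mem_dom _ _).mpr ⟨u, hu⟩
  have hyd : y ∈ f.Dom := (PFun.mem_dom _ _).mpr ⟨v, hv⟩
  have hud : u ∈ g.Dom := (PFun.mem_dom _ _).mpr ⟨a, hau⟩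
  have hvd : v ∈ g.Dom := (PFun.mem_dom _ _).mpr ⟨b, hbv⟩
  exact (hf.2.2 x hxd y hyd u v hu hv).trans (hg.2.2 u hud v hvd a b hau hbv)

/-- Multiplication on `OI_n(L)`, written in the paper's (left-to-right) convention:
`x (α * β) = (x α) β`, i.e. `α * β` is the composition `β ∘ α` of partial maps. -/
instance [LinearOrder L] {n : ℕ} : Semigroup (OI L n) where
  mul a b := ⟨b.1.comp a.1, a.2.comp b.2⟩
  mul_assoc a b c := Subtype.ext (PFun.comp_assoc c.1 b.1 a.1).symm

/-- The inverse partial map of a partial map. -/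
noncomputable def pinv (f : L →. L) : L →. L :=
  fun y => ⟨∃ x, y ∈ f x, fun h => Classical.choose h⟩

theorem pinv_spec {f : L →. L} {y b : L} (h : b ∈ pinv f y) : y ∈ f b := by
  obtain ⟨hd, hb⟩ := h
  exact hb ▸ Classical.choose_spec hd

theorem IsOI.pinv [LinearOrder L] {n : ℕ} {f : L →. L} (hf : IsOI n f) :
    IsOI n (_root_.pinv f) := by
  classical
  have hdom : (_root_.pinv f).Dom =
      (fun x => if h : (f x).Dom then (f x).get h else x) '' f.Dom := by
    ext y
    constructor
    · rintro ⟨x, hx⟩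
      have hxd : (f x).Dom := Part.dom_iff_mem.mpr ⟨y, hx⟩
      refine ⟨x, hxd, ?_⟩
      show (if h : (f x).Dom then (f x).get h else x) = y
      rw [dif_pos hxd]
      exact Part.get_eq_of_mem hx hxd
    · rintro ⟨x, hxd, rfl⟩
      have hxd' : (f x).Dom := hxd
      refine ⟨x, ?_⟩
      show (if h : (f x).Dom then (f x).get h else x) ∈ f x
      rw [dif_pos hxd']
      exact Part.get_mem hxd'
  constructor
  · rw [hdom]; exact hf.1.image _
  constructor
  · rw [hdom]
    exact le_trans (Set.ncard_image_le hf.1) hf.2.1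
  · intro y1 h1 y2 h2 b1 b2 hb1 hb2
    have e1 := pinv_spec hb1
    have e2 := pinv_spec hb2
    have d1 : b1 ∈ f.Dom := (PFun.mem_dom _ _).mpr ⟨y1, e1⟩
    have d2 : b2 ∈ f.Dom := (PFun.mem_dom _ _).mpr ⟨y2, e2⟩
    exact (hf.2.2 b1 d1 b2 d2 y1 y2 e1 e2).symm

/-- Inversion `α ↦ α⁻¹` on `OI_n(L)`: the inverse partial bijection. -/
noncomputable instance [LinearOrder L] {n : ℕ} : Inv (OI L n) :=
  ⟨fun a => ⟨_root_.pinv a.1, a.2.pinv⟩⟩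

/-- The natural partial order on the inverse semigroup `OI_n(L)`:
`a ≼ b` iff `a = b * e` for some idempotent `e`. -/
def nle [LinearOrder L] {n : ℕ} (a b : OI L n) : Prop :=
  ∃ e : OI L n, e * e = e ∧ a = b * e

/-- The up-set `↑_≼ a = {b | a ≼ b}` with respect to the natural partial order. -/
def upSet [LinearOrder L] {n : ℕ} (a : OI L n) : Set (OI L n) := {b | nle a b}


section Aux

variable [LinearOrder L] {n : ℕ}

theorem oi_mem_mul {a b : OI L n} {x z : L} :
    z ∈ (a * b).1 x ↔ ∃ y, y ∈ a.1 x ∧ z ∈ b.1 y := by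
  show z ∈ (b.1.comp a.1) x ↔ _
  rw [PFun.comp_apply]
  exact Part.mem_bind_iff

theorem IsOI.inj {f : L →. L} (hf : IsOI n f) {x₁ x₂ y : L}
    (h1 : y ∈ f x₁) (h2 : y ∈ f x₂) : x₁ = x₂ := by
  have d1 : x₁ ∈ f.Dom := (PFun.mem_dom _ _).mpr ⟨y, h1⟩
  have d2 : x₂ ∈ f.Dom := (PFun.mem_dom _ _).mpr ⟨y, h2⟩
  exact le_antisymm ((hf.2.2 x₁ d1 x₂ d2 y y h1 h2).mpr le_rfl)
    ((hf.2.2 x₂ d2 x₁ d1 y y h2 h1).mpr le_rfl)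

theorem oi_mem_inv {a : OI L n} {x y : L} : y ∈ (a⁻¹).1 x ↔ x ∈ a.1 y := by
  constructor
  · exact fun h => pinv_spec h
  · intro h
    have hd : ∃ t, x ∈ a.1 t := ⟨y, h⟩
    exact ⟨hd, a.2.inj (Classical.choose_spec hd) h⟩

theorem oi_ext {a b : OI L n} (h : ∀ x y, y ∈ a.1 x ↔ y ∈ b.1 x) : a = b :=
  Subtype.ext (PFun.ext fun x y => h x y)

/-- Graph-inclusion order on `OI L n`. -/
def sble (a b : OI L n) : Prop := ∀ x y, y ∈ a.1 x → y ∈ b.1 x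

theorem sble_refl (a : OI L n) : sble a a := fun _ _ h => h

theorem sble_trans {a b c : OI L n} (h1 : sble a b) (h2 : sble b c) : sble a c :=
  fun x y h => h2 x y (h1 x y h)

theorem idem_mem {e : OI L n} (he : e * e = e) {x y : L} (h : y ∈ e.1 x) : y = x := by
  have h' : y ∈ (e * e).1 x := by rw [he]; exact h
  obtain ⟨t, ht, hyt⟩ := oi_mem_mul.mp h'
  have : t = y := Part.mem_unique ht h
  subst this
  exact e.2.inj hyt h

theorem inv_mul_char {a : OI L n} {t z : L} :
    z ∈ (a⁻¹ * a).1 t ↔ t = z ∧ ∃ u, t ∈ a.1 u := by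
  rw [oi_mem_mul]
  constructor
  · rintro ⟨u, hu, hz⟩
    rw [oi_mem_inv] at hu
    exact ⟨Part.mem_unique hu hz, u, hu⟩
  · rintro ⟨rfl, u, hu⟩
    exact ⟨u, oi_mem_inv.mpr hu, hu⟩

theorem mul_inv_char {a : OI L n} {t z : L} :
    z ∈ (a * a⁻¹).1 t ↔ t = z ∧ t ∈ a.1.Dom := by
  rw [oi_mem_mul]
  constructor
  · rintro ⟨u, hu, hz⟩
    rw [oi_mem_inv] at hz
    exact ⟨a.2.inj hu hz, (PFun.mem_dom _ _).mpr ⟨u, hu⟩⟩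
  · rintro ⟨rfl, ht⟩
    obtain ⟨u, hu⟩ := (PFun.mem_dom _ _).mp ht
    exact ⟨u, hu, oi_mem_inv.mpr hu⟩

theorem inv_mul_idem (a : OI L n) : (a⁻¹ * a) * (a⁻¹ * a) = a⁻¹ * a := by
  apply oi_ext
  intro x y
  rw [oi_mem_mul]
  constructor
  · rintro ⟨t, ht, hy⟩
    obtain ⟨rfl, hu⟩ := inv_mul_char.mp ht
    exact hy
  · intro h
    obtain ⟨rfl, hu⟩ := inv_mul_char.mp h
    exact ⟨x, h, h⟩

theorem nle_iff {a b : OI L n} : nle a b ↔ sble a b := by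
  constructor
  · rintro ⟨e, he, rfl⟩
    intro x y hy
    obtain ⟨t, ht, hyt⟩ := oi_mem_mul.mp hy
    have := idem_mem he hyt
    subst this
    exact ht
  · intro h
    refine ⟨a⁻¹ * a, inv_mul_idem a, ?_⟩
    apply oi_ext
    intro x y
    rw [oi_mem_mul]
    constructor
    · intro hy
      exact ⟨y, h x y hy, inv_mul_char.mpr ⟨rfl, x, hy⟩⟩
    · rintro ⟨t, ht, hyt⟩
      obtain ⟨rfl, u, hu⟩ := inv_mul_char.mp hyt
      have : u = x := b.2.inj (h u t hu) ht
      subst this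
      exact hu

theorem nle_refl (a : OI L n) : nle a a := nle_iff.mpr (sble_refl a)

theorem nle_trans {a b c : OI L n} (h1 : nle a b) (h2 : nle b c) : nle a c :=
  nle_iff.mpr (sble_trans (nle_iff.mp h1) (nle_iff.mp h2))

theorem nle_antisymm {a b : OI L n} (h1 : nle a b) (h2 : nle b a) : a = b :=
  oi_ext fun x y => ⟨nle_iff.mp h1 x y, nle_iff.mp h2 x y⟩

theorem upSet_eq (b : OI L n) :
    upSet b = (fun x => x * (b⁻¹ * b)) ⁻¹' {b} := by
  ext x
  simp only [upSet, Set.mem_setOf_eq, Set.mem_preimage, Set.mem_singleton_iff]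
  constructor
  · intro h
    have hs := nle_iff.mp h
    apply oi_ext
    intro t y
    rw [oi_mem_mul]
    constructor
    · rintro ⟨s, hs', hy⟩
      obtain ⟨heq, u, hu⟩ := inv_mul_char.mp hy
      have hut : u = t := x.2.inj (hs u s hu) hs'
      rw [← heq, ← hut]
      exact hu
    · intro hy
      exact ⟨y, hs t y hy, inv_mul_char.mpr ⟨rfl, t, hy⟩⟩
  · intro h
    exact ⟨b⁻¹ * b, inv_mul_idem b, h.symm⟩

theorem sble_mul_left {x y : OI L n} (γ : OI L n) (h : sble x y) :
    sble (γ * x) (γ * y) := by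
  intro t z hz
  obtain ⟨u, hu, hzu⟩ := oi_mem_mul.mp hz
  exact oi_mem_mul.mpr ⟨u, hu, h u z hzu⟩

theorem sble_mul_right {x y : OI L n} (γ : OI L n) (h : sble x y) :
    sble (x * γ) (y * γ) := by
  intro t z hz
  obtain ⟨u, hu, hzu⟩ := oi_mem_mul.mp hz
  exact oi_mem_mul.mpr ⟨u, h t u hu, hzu⟩

theorem sble_unshift_left {γ b y : OI L n} (h : sble b (γ * y)) :
    sble (γ⁻¹ * b) y := by
  intro s z hz
  obtain ⟨t, ht, hzt⟩ := oi_mem_mul.mp hz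
  rw [oi_mem_inv] at ht
  obtain ⟨u, hu, hzu⟩ := oi_mem_mul.mp (h t z hzt)
  rwa [Part.mem_unique hu ht] at hzu

theorem sble_shift_left {γ b x y : OI L n} (hb : sble b (γ * y))
    (hc : sble (γ⁻¹ * b) x) : sble b (γ * x) := by
  intro t z hz
  obtain ⟨u, hu, hzu⟩ := oi_mem_mul.mp (hb t z hz)
  have hmem : z ∈ (γ⁻¹ * b).1 u := oi_mem_mul.mpr ⟨t, oi_mem_inv.mpr hu, hz⟩
  exact oi_mem_mul.mpr ⟨u, hu, hc u z hmem⟩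

theorem sble_unshift_right {γ b y : OI L n} (h : sble b (y * γ)) :
    sble (b * γ⁻¹) y := by
  intro t s hs
  obtain ⟨z, hz, hsz⟩ := oi_mem_mul.mp hs
  rw [oi_mem_inv] at hsz
  obtain ⟨u, hu, hzu⟩ := oi_mem_mul.mp (h t z hz)
  rwa [γ.2.inj hsz hzu]

theorem sble_shift_right {γ b x y : OI L n} (hb : sble b (y * γ))
    (hc : sble (b * γ⁻¹) x) : sble b (x * γ) := by
  intro t z hz
  obtain ⟨s, hs, hzs⟩ := oi_mem_mul.mp (hb t z hz)
  have hmem : s ∈ (b * γ⁻¹).1 t := oi_mem_mul.mpr ⟨z, hz, oi_mem_inv.mpr hzs⟩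
  exact oi_mem_mul.mpr ⟨s, hc t s hmem, hzs⟩

theorem IsOI.of_subset {f g : L →. L} (hg : IsOI n g)
    (h : ∀ x y, y ∈ f x → y ∈ g x) : IsOI n f := by
  have hsub : f.Dom ⊆ g.Dom := by
    intro x hx
    obtain ⟨y, hy⟩ := (PFun.mem_dom _ _).mp hx
    exact (PFun.mem_dom _ _).mpr ⟨y, h x y hy⟩
  refine ⟨hg.1.subset hsub, le_trans (Set.ncard_le_ncard hsub hg.1) hg.2.1, ?_⟩
  intro x hx y hy a b ha hb
  exact hg.2.2 x (hsub hx) y (hsub hy) a b (h x a ha) (h y b hb)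

theorem sble_dom {a b : OI L n} (h : sble a b) : a.1.Dom ⊆ b.1.Dom := by
  intro x hx
  obtain ⟨y, hy⟩ := (PFun.mem_dom _ _).mp hx
  exact (PFun.mem_dom _ _).mpr ⟨y, h x y hy⟩

theorem eq_of_sble_of_rank {a x : OI L n} (h : sble a x) (hr : n ≤ a.1.Dom.ncard) :
    x = a := by
  have hdom : a.1.Dom = x.1.Dom :=
    Set.eq_of_subset_of_ncard_le (sble_dom h) (le_trans x.2.2.1 hr) x.2.1
  apply oi_ext
  intro t y
  refine ⟨fun hy => ?_, h t y⟩
  have ht : t ∈ a.1.Dom := hdom ▸ (PFun.mem_dom _ _).mpr ⟨y, hy⟩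
  obtain ⟨z, hz⟩ := (PFun.mem_dom _ _).mp ht
  rwa [← Part.mem_unique (h t z hz) hy]

/-- The zero (empty map) of `OI L n`. -/
def oiBot : OI L n :=
  ⟨fun _ => Part.none, by
    have hd : PFun.Dom (fun _ : L => (Part.none : Part L)) = (∅ : Set L) := by
      ext x
      constructor
      · intro hx
        obtain ⟨y, hy⟩ := (PFun.mem_dom _ _).mp hx
        exact absurd hy (Part.notMem_none y)
      · exact fun h => h.elim
    refine ⟨?_, ?_, ?_⟩
    · rw [hd]; exact Set.finite_empty
    · rw [hd]; simp
    · intro x hx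
      rw [hd] at hx
      exact absurd hx (Set.notMem_empty x)⟩

theorem sble_oiBot (a : OI L n) : sble oiBot a := by
  intro x y hy
  exact absurd hy (Part.notMem_none y)

open Classical in
/-- Join of two partial maps (preferring the first where both are defined). -/
noncomputable def pjoin (f g : L →. L) : L →. L := fun x =>
  ⟨(f x).Dom ∨ (g x).Dom, fun h =>
    if h1 : (f x).Dom then (f x).get h1 else (g x).get (h.resolve_left h1)⟩

open Classical in
theorem pjoin_get (f g : L →. L) (x : L) (hd : (pjoin f g x).Dom) :
    (pjoin f g x).get hd =
      if h1 : (f x).Dom then (f x).get h1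
      else (g x).get (Or.resolve_left hd h1) := rfl

theorem pjoin_dom {f g : L →. L} {x : L} :
    (pjoin f g x).Dom ↔ (f x).Dom ∨ (g x).Dom := Iff.rfl

theorem mem_pjoin_left {f g : L →. L} {x y : L} (h : y ∈ f x) : y ∈ pjoin f g x := by
  refine ⟨Or.inl h.1, ?_⟩
  refine (pjoin_get f g x _).trans ?_
  rw [dif_pos h.1]
  exact h.2

theorem mem_pjoin_elim {f g : L →. L} {x y : L} (h : y ∈ pjoin f g x) :
    y ∈ f x ∨ y ∈ g x := by
  obtain ⟨hd, hy⟩ := h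
  rw [pjoin_get] at hy
  by_cases h1 : (f x).Dom
  · rw [dif_pos h1] at hy
    exact Or.inl ⟨h1, hy⟩
  · rw [dif_neg h1] at hy
    exact Or.inr ⟨Or.resolve_left hd h1, hy⟩

theorem mem_pjoin_right {c : OI L n} {f g : L →. L} {x y : L}
    (hf : ∀ x y, y ∈ f x → y ∈ c.1 x) (hg : ∀ x y, y ∈ g x → y ∈ c.1 x)
    (h : y ∈ g x) : y ∈ pjoin f g x := by
  refine ⟨Or.inr h.1, ?_⟩
  refine (pjoin_get f g x _).trans ?_
  by_cases h1 : (f x).Dom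
  · rw [dif_pos h1]
    have hfx : (f x).get h1 ∈ f x := Part.get_mem h1
    exact Part.mem_unique (hf x _ hfx) (hg x y h)
  · rw [dif_neg h1]
    exact h.2

/-- The join in `OI L n` of two elements with a common upper bound. -/
noncomputable def oiJoin (a b c : OI L n) (ha : sble a c) (hb : sble b c) : OI L n :=
  ⟨pjoin a.1 b.1, c.2.of_subset fun x y hy =>
    (mem_pjoin_elim hy).elim (ha x y) (hb x y)⟩

theorem sble_oiJoin_left {a b c : OI L n} (ha : sble a c) (hb : sble b c) :
    sble a (oiJoin a b c ha hb) := fun x y h => mem_pjoin_left h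

theorem sble_oiJoin_right {a b c : OI L n} (ha : sble a c) (hb : sble b c) :
    sble b (oiJoin a b c ha hb) := fun x y h => mem_pjoin_right ha hb h

theorem oiJoin_sble {a b c x : OI L n} (ha : sble a c) (hb : sble b c)
    (hxa : sble a x) (hxb : sble b x) : sble (oiJoin a b c ha hb) x :=
  fun t y h => (mem_pjoin_elim h).elim (hxa t y) (hxb t y)

theorem oiJoin_rank_lt {a b c : OI L n} (ha : sble a c) (hb : sble b c)
    (hnle : ¬ sble b a) : a.1.Dom.ncard < (oiJoin a b c ha hb).1.Dom.ncard := by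
  set d := oiJoin a b c ha hb with hd
  have hsub : a.1.Dom ⊆ d.1.Dom := sble_dom (sble_oiJoin_left ha hb)
  have hex : ∃ t, t ∈ b.1.Dom ∧ t ∉ a.1.Dom := by
    by_contra hcon
    push_neg at hcon
    apply hnle
    intro t y hy
    have htd : t ∈ a.1.Dom := hcon t ((PFun.mem_dom _ _).mpr ⟨y, hy⟩)
    obtain ⟨z, hz⟩ := (PFun.mem_dom _ _).mp htd
    rwa [Part.mem_unique (hb t y hy) (ha t z hz)]
  obtain ⟨t, htb, hta⟩ := hex
  have htd : t ∈ d.1.Dom := sble_dom (sble_oiJoin_right ha hb) htb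
  exact Set.ncard_lt_ncard ((Set.ssubset_iff_of_subset hsub).mpr ⟨t, htd, hta⟩) d.2.1

/-- The canonical compact topology on `OI L n`. -/
def tau0 (L : Type u) [LinearOrder L] (n : ℕ) : TopologicalSpace (OI L n) where
  IsOpen U := ∀ a ∈ U, ∃ F : Finset (OI L n),
    (∀ b ∈ F, ¬ nle b a) ∧ ∀ x, nle a x → (∀ b ∈ F, ¬ nle b x) → x ∈ U
  isOpen_univ := fun a _ => ⟨∅, by simp, fun x _ _ => trivial⟩
  isOpen_inter := by
    intro s t hs ht a ha
    classical
    obtain ⟨F1, h1, h2⟩ := hs a ha.1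
    obtain ⟨F2, h3, h4⟩ := ht a ha.2
    refine ⟨F1 ∪ F2, ?_, ?_⟩
    · intro b hb
      rcases Finset.mem_union.mp hb with hb | hb
      · exact h1 b hb
      · exact h3 b hb
    · intro x hx hav
      exact ⟨h2 x hx fun b hb => hav b (Finset.mem_union_left _ hb),
        h4 x hx fun b hb => hav b (Finset.mem_union_right _ hb)⟩
  isOpen_sUnion := by
    intro S hS a ha
    obtain ⟨s, hsS, has⟩ := ha
    obtain ⟨F, h1, h2⟩ := hS s hsS a has
    exact ⟨F, h1, fun x hx hav => ⟨s, hsS, h2 x hx hav⟩⟩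

theorem tau0_isOpen_iff {U : Set (OI L n)} :
    IsOpen[tau0 L n] U ↔ ∀ a ∈ U, ∃ F : Finset (OI L n),
      (∀ b ∈ F, ¬ nle b a) ∧ ∀ x, nle a x → (∀ b ∈ F, ¬ nle b x) → x ∈ U := Iff.rfl

theorem tau0_isOpen_basic (a : OI L n) (F : Finset (OI L n)) :
    IsOpen[tau0 L n] {x | nle a x ∧ ∀ b ∈ F, ¬ nle b x} := by
  rw [tau0_isOpen_iff]
  intro x hx
  exact ⟨F, hx.2, fun y hy hav => ⟨nle_trans hx.1 hy, hav⟩⟩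

theorem tau0_t2 : @T2Space (OI L n) (tau0 L n) := by
  letI := tau0 L n
  constructor
  intro a b hab
  classical
  by_cases h1 : nle a b
  · have h2 : ¬ nle b a := fun h => hab (nle_antisymm h1 h)
    refine ⟨{x | nle a x ∧ ∀ c ∈ ({b} : Finset (OI L n)), ¬ nle c x},
      {x | nle b x ∧ ∀ c ∈ (∅ : Finset (OI L n)), ¬ nle c x},
      tau0_isOpen_basic a _, tau0_isOpen_basic b _,
      ⟨nle_refl a, by simpa using h2⟩, ⟨nle_refl b, by simp⟩, ?_⟩
    rw [Set.disjoint_left]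
    rintro x ⟨-, hx2⟩ ⟨hx3, -⟩
    exact hx2 b (Finset.mem_singleton_self b) hx3
  · by_cases h2 : nle b a
    · refine ⟨{x | nle a x ∧ ∀ c ∈ (∅ : Finset (OI L n)), ¬ nle c x},
        {x | nle b x ∧ ∀ c ∈ ({a} : Finset (OI L n)), ¬ nle c x},
        tau0_isOpen_basic a _, tau0_isOpen_basic b _,
        ⟨nle_refl a, by simp⟩, ⟨nle_refl b, by simpa using h1⟩, ?_⟩
      rw [Set.disjoint_left]
      rintro x ⟨hx1, -⟩ ⟨-, hx4⟩
      exact hx4 a (Finset.mem_singleton_self a) hx1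
    · by_cases hc : ∃ c, nle a c ∧ nle b c
      · obtain ⟨c, hac, hbc⟩ := hc
        set d := oiJoin a b c (nle_iff.mp hac) (nle_iff.mp hbc) with hd
        have had : nle a d := nle_iff.mpr (sble_oiJoin_left _ _)
        have hbd : nle b d := nle_iff.mpr (sble_oiJoin_right _ _)
        refine ⟨{x | nle a x ∧ ∀ e ∈ ({d} : Finset (OI L n)), ¬ nle e x},
          {x | nle b x ∧ ∀ e ∈ ({d} : Finset (OI L n)), ¬ nle e x},
          tau0_isOpen_basic a _, tau0_isOpen_basic b _, ?_, ?_, ?_⟩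
        · refine ⟨nle_refl a, ?_⟩
          simp only [Finset.mem_singleton, forall_eq]
          exact fun h => h2 (nle_trans hbd h)
        · refine ⟨nle_refl b, ?_⟩
          simp only [Finset.mem_singleton, forall_eq]
          exact fun h => h1 (nle_trans had h)
        · rw [Set.disjoint_left]
          rintro x ⟨hx1, hx2⟩ ⟨hx3, -⟩
          exact hx2 d (Finset.mem_singleton_self d)
            (nle_iff.mpr (oiJoin_sble _ _ (nle_iff.mp hx1) (nle_iff.mp hx3)))
      · refine ⟨{x | nle a x ∧ ∀ e ∈ (∅ : Finset (OI L n)), ¬ nle e x},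
          {x | nle b x ∧ ∀ e ∈ (∅ : Finset (OI L n)), ¬ nle e x},
          tau0_isOpen_basic a _, tau0_isOpen_basic b _,
          ⟨nle_refl a, by simp⟩, ⟨nle_refl b, by simp⟩, ?_⟩
        rw [Set.disjoint_left]
        rintro x ⟨hx1, -⟩ ⟨hx3, -⟩
        exact hc ⟨x, hx1, hx3⟩

theorem tau0_compact_upSet : ∀ (m : ℕ) (a : OI L n), n ≤ m + a.1.Dom.ncard →
    @IsCompact _ (tau0 L n) (upSet a) := by
  intro m
  induction m with
  | zero =>
    intro a ha
    letI := tau0 L n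
    have hsub : upSet a ⊆ {a} := by
      intro x hx
      exact eq_of_sble_of_rank (nle_iff.mp hx) (by omega)
    exact ((Set.subsingleton_singleton).anti hsub).isCompact
  | succ m ih =>
    intro a ha
    letI := tau0 L n
    apply isCompact_of_finite_subcover
    intro ι U hUo hcov
    classical
    obtain ⟨i₀, hi₀⟩ := Set.mem_iUnion.mp (hcov (nle_refl a))
    obtain ⟨F, hF1, hF2⟩ := (tau0_isOpen_iff.mp (hUo i₀)) a hi₀
    have key : ∀ b ∈ F, ∃ t : Finset ι, (upSet a ∩ upSet b) ⊆ ⋃ i ∈ t, U i := by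
      intro b hb
      by_cases hex : ∃ c, c ∈ upSet a ∩ upSet b
      · obtain ⟨c, hca, hcb⟩ := hex
        set d := oiJoin a b c (nle_iff.mp hca) (nle_iff.mp hcb) with hd
        have hlt : a.1.Dom.ncard < d.1.Dom.ncard :=
          oiJoin_rank_lt _ _ (fun hs => hF1 b hb (nle_iff.mpr hs))
        have hcomp := ih d (by omega)
        have hdsub : upSet d ⊆ ⋃ i, U i := by
          intro x hx
          exact hcov (nle_trans (nle_iff.mpr (sble_oiJoin_left _ _)) hx)
        obtain ⟨t, ht⟩ := hcomp.elim_finite_subcover U hUo hdsub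
        refine ⟨t, fun x hx => ht ?_⟩
        exact nle_iff.mpr (oiJoin_sble _ _ (nle_iff.mp hx.1) (nle_iff.mp hx.2))
      · exact ⟨∅, fun x hx => absurd ⟨x, hx⟩ hex⟩
    choose! t ht using key
    refine ⟨insert i₀ (F.biUnion t), ?_⟩
    intro x hx
    by_cases hav : ∀ b ∈ F, ¬ nle b x
    · exact Set.mem_biUnion (Finset.mem_insert_self i₀ _) (hF2 x hx hav)
    · push_neg at hav
      obtain ⟨b, hbF, hbx⟩ := hav
      have := ht b hbF ⟨hx, hbx⟩
      obtain ⟨i, hi⟩ := Set.mem_iUnion.mp this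
      obtain ⟨hit, hxU⟩ := Set.mem_iUnion.mp hi
      exact Set.mem_biUnion
        (Finset.mem_insert_of_mem (Finset.mem_biUnion.mpr ⟨b, hbF, hit⟩)) hxU

theorem univ_eq_upSet_oiBot : (Set.univ : Set (OI L n)) = upSet oiBot := by
  ext x
  simp only [Set.mem_univ, true_iff]
  exact nle_iff.mpr (sble_oiBot x)

theorem tau0_compactSpace : @CompactSpace (OI L n) (tau0 L n) := by
  letI := tau0 L n
  rw [← isCompact_univ_iff, univ_eq_upSet_oiBot]
  exact tau0_compact_upSet n oiBot (Nat.le_add_right n _)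

theorem tau0_continuous_mul_left (γ : OI L n) :
    Continuous[tau0 L n, tau0 L n] (fun x => γ * x) := by
  letI := tau0 L n
  rw [continuous_def]
  intro U hU
  rw [tau0_isOpen_iff]
  intro x hx
  obtain ⟨F, hF1, hF2⟩ := (tau0_isOpen_iff.mp hU) (γ * x) hx
  classical
  refine ⟨(F.image (fun b => γ⁻¹ * b)).filter (fun b' => ¬ nle b' x), ?_, ?_⟩
  · intro b' hb'
    exact (Finset.mem_filter.mp hb').2
  · intro y hxy hav
    show γ * y ∈ U
    apply hF2 (γ * y) (nle_iff.mpr (sble_mul_left γ (nle_iff.mp hxy)))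
    intro b hbF hby
    have hby' : sble b (γ * y) := nle_iff.mp hby
    by_cases hcx : nle (γ⁻¹ * b) x
    · exact hF1 b hbF (nle_iff.mpr (sble_shift_left hby' (nle_iff.mp hcx)))
    · exact hav (γ⁻¹ * b)
        (Finset.mem_filter.mpr ⟨Finset.mem_image_of_mem _ hbF, hcx⟩)
        (nle_iff.mpr (sble_unshift_left hby'))

theorem tau0_continuous_mul_right (γ : OI L n) :
    Continuous[tau0 L n, tau0 L n] (fun x => x * γ) := by
  letI := tau0 L n
  rw [continuous_def]
  intro U hU
  rw [tau0_isOpen_iff]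
  intro x hx
  obtain ⟨F, hF1, hF2⟩ := (tau0_isOpen_iff.mp hU) (x * γ) hx
  classical
  refine ⟨(F.image (fun b => b * γ⁻¹)).filter (fun b' => ¬ nle b' x), ?_, ?_⟩
  · intro b' hb'
    exact (Finset.mem_filter.mp hb').2
  · intro y hxy hav
    show y * γ ∈ U
    apply hF2 (y * γ) (nle_iff.mpr (sble_mul_right γ (nle_iff.mp hxy)))
    intro b hbF hby
    have hby' : sble b (y * γ) := nle_iff.mp hby
    by_cases hcx : nle (b * γ⁻¹) x
    · exact hF1 b hbF (nle_iff.mpr (sble_shift_right hby' (nle_iff.mp hcx)))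
    · exact hav (b * γ⁻¹)
        (Finset.mem_filter.mpr ⟨Finset.mem_image_of_mem _ hbF, hcx⟩)
        (nle_iff.mpr (sble_unshift_right hby'))

theorem upSet_isClosed (τ : TopologicalSpace (OI L n)) (h2 : @T2Space _ τ)
    (hr : ∀ γ : OI L n, Continuous[τ, τ] fun x : OI L n => x * γ) (b : OI L n) :
    IsClosed[τ] (upSet b) := by
  letI := τ; haveI := h2
  rw [upSet_eq]
  exact IsClosed.preimage (hr (b⁻¹ * b)) isClosed_singleton

theorem exists_open_subset_upSet (τ : TopologicalSpace (OI L n)) (h2 : @T2Space _ τ)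
    (hl : ∀ γ : OI L n, Continuous[τ, τ] fun x : OI L n => γ * x)
    (hr : ∀ γ : OI L n, Continuous[τ, τ] fun x : OI L n => x * γ) (a : OI L n) :
    ∃ W : Set (OI L n), IsOpen[τ] W ∧ a ∈ W ∧ W ⊆ upSet a := by
  letI := τ; haveI := h2
  classical
  set R : Set L := (_root_.pinv a.1).Dom with hRdef
  have hRfin : R.Finite := a.2.pinv.1
  have hRmem : ∀ z, z ∈ R ↔ ∃ s, z ∈ a.1 s := fun z => Iff.rfl
  set D := a.1.Dom with hDdef
  set Z : Set (OI L n) := {c | ∀ t z, z ∈ c.1 t → t ∈ D ∧ z ∈ R} with hZdef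
  have hZfin : Z.Finite := by
    set φ : OI L n → Set (L × L) := fun c => {p : L × L | p.2 ∈ c.1 p.1} with hφ
    have hinj : Function.Injective φ := by
      intro c d h
      apply oi_ext
      intro x y
      exact ⟨fun hm => (Set.ext_iff.mp h (x, y)).mp hm,
        fun hm => (Set.ext_iff.mp h (x, y)).mpr hm⟩
    have hsub : Z ⊆ φ ⁻¹' {S : Set (L × L) | S ⊆ D ×ˢ R} := by
      intro c hc p hp
      exact Set.mem_prod.mpr (hc p.1 p.2 hp)
    exact (Set.Finite.preimage hinj.injOn
      ((a.2.1.prod hRfin).finite_subsets)).subset hsub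
  have haZ : a ∈ Z := fun t z hz => ⟨(PFun.mem_dom _ _).mpr ⟨z, hz⟩, ⟨t, hz⟩⟩
  set e₁ : OI L n := a * a⁻¹ with he₁
  set e₂ : OI L n := a⁻¹ * a with he₂
  set g : OI L n → OI L n := fun x => e₁ * x * e₂ with hg
  have hgmem : ∀ x t z, z ∈ (g x).1 t ↔ (z ∈ x.1 t ∧ t ∈ D ∧ z ∈ R) := by
    intro x t z
    constructor
    · intro hz
      obtain ⟨w, hw, hzw⟩ := oi_mem_mul.mp hz
      obtain ⟨u, hu, hwu⟩ := oi_mem_mul.mp hw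
      obtain ⟨heq, huD⟩ := mul_inv_char.mp hu
      obtain ⟨heq2, s, hs⟩ := inv_mul_char.mp hzw
      subst heq
      subst heq2
      exact ⟨hwu, huD, s, hs⟩
    · rintro ⟨hzx, htD, hzR⟩
      have h1 : t ∈ e₁.1 t := mul_inv_char.mpr ⟨rfl, htD⟩
      have h2' : z ∈ e₂.1 z := inv_mul_char.mpr ⟨rfl, (hRmem z).mp hzR⟩
      exact oi_mem_mul.mpr ⟨z, oi_mem_mul.mpr ⟨t, h1, hzx⟩, h2'⟩
  have hgZ : ∀ x, g x ∈ Z := fun x t z hz => ((hgmem x t z).mp hz).2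
  have hga : g a = a := by
    apply oi_ext
    intro t z
    constructor
    · intro h
      exact ((hgmem a t z).mp h).1
    · intro h
      exact (hgmem a t z).mpr ⟨h, (PFun.mem_dom _ _).mpr ⟨z, h⟩, ⟨t, h⟩⟩
  have hgcont : Continuous[τ, τ] g := (hr e₂).comp (hl e₁)
  have hclosed : IsClosed[τ] (Z \ {a}) := (hZfin.subset Set.diff_subset).isClosed
  refine ⟨g ⁻¹' (Z \ {a})ᶜ, (isOpen_compl_iff.mpr hclosed).preimage hgcont, ?_, ?_⟩
  · show g a ∉ Z \ {a}
    rw [hga]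
    simp
  · intro x hx
    have hgx : g x ∈ Z := hgZ x
    have hxa : g x = a := by
      by_contra hne
      exact hx ⟨hgx, hne⟩
    show nle a x
    apply nle_iff.mpr
    intro t z hz
    have hz' : z ∈ (g x).1 t := by rw [hxa]; exact hz
    exact ((hgmem x t z).mp hz').1

theorem tau0_unique (τ : TopologicalSpace (OI L n)) (h2 : @T2Space _ τ)
    (hc : @CompactSpace _ τ)
    (hl : ∀ γ : OI L n, Continuous[τ, τ] fun x : OI L n => γ * x)
    (hr : ∀ γ : OI L n, Continuous[τ, τ] fun x : OI L n => x * γ) :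
    τ = tau0 L n := by
  have hle : τ ≤ tau0 L n := by
    letI := τ; haveI := h2
    rw [TopologicalSpace.le_def]
    intro U hU
    show IsOpen U
    rw [isOpen_iff_forall_mem_open]
    intro a haU
    obtain ⟨F, hF1, hF2⟩ := tau0_isOpen_iff.mp hU a haU
    obtain ⟨W, hWo, haW, hWsub⟩ := exists_open_subset_upSet τ h2 hl hr a
    classical
    refine ⟨W ∩ ⋂ b ∈ F, (upSet b)ᶜ, ?_, ?_, ?_⟩
    · intro x hx
      refine hF2 x (hWsub hx.1) fun b hb => ?_
      have := Set.mem_iInter₂.mp hx.2 b hb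
      exact this
    · refine hWo.inter (isOpen_biInter_finset fun b _ => ?_)
      exact isOpen_compl_iff.mpr (upSet_isClosed τ h2 hr b)
    · exact ⟨haW, Set.mem_iInter₂.mpr fun b hb => hF1 b hb⟩
  have hge : tau0 L n ≤ τ := by
    rw [TopologicalSpace.le_def]
    intro U hU
    have hclosed : IsClosed[τ] Uᶜ := by
      letI := τ
      exact isClosed_compl_iff.mpr hU
    have hcpt : @IsCompact _ τ Uᶜ := by
      letI := τ; haveI := hc
      exact hclosed.isCompact
    have hcpt0 : @IsCompact _ (tau0 L n) Uᶜ := by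
      have hid : Continuous[τ, tau0 L n] id := continuous_id_of_le hle
      have := @IsCompact.image _ _ τ (tau0 L n) _ _ hcpt hid
      rwa [Set.image_id] at this
    have hcl0 : IsClosed[tau0 L n] Uᶜ := by
      letI := tau0 L n
      haveI : T2Space (OI L n) := tau0_t2
      exact hcpt0.isClosed
    letI := tau0 L n
    exact isClosed_compl_iff.mp hcl0
  exact le_antisymm hle hge

end Aux

/-- There exists exactly one Hausdorff compact topology on `OI_n(L)`
with respect to which multiplication is separately continuous. -/
theorem existsUnique_compact_hausdorff_shift_continuous_topology
    (L : Type u) [LinearOrder L] [Infinite L] (n : ℕ) (hn : 0 < n) :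
    ∃! τ : TopologicalSpace (OI L n), @T2Space (OI L n) τ ∧ @CompactSpace (OI L n) τ ∧
      (∀ γ : OI L n, Continuous[τ, τ] fun x : OI L n => γ * x) ∧
      (∀ γ : OI L n, Continuous[τ, τ] fun x : OI L n => x * γ) := by
  refine ⟨tau0 L n, ⟨tau0_t2, tau0_compactSpace,
    fun γ => tau0_continuous_mul_left γ, fun γ => tau0_continuous_mul_right γ⟩, ?_⟩
  rintro τ ⟨h2, hc, hl, hr⟩
  exact tau0_unique τ h2 hc hl hr
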